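/- Let λ be a regular uncountable cardinal, ⟨θ_ε : ε < λ⟩ a sequence of infinite cardinals below λ, and F : ^λ2 → ∏_{ε<λ} θ_ε the block-coding map. Then for every subset U of ∏_{ε<λ} θ_ε which is nowhere dense in the <λ-box topology, the preimage F^{-1}(U) is nowhere dense in ^λ2 with the <λ-box topology. -/

import Mathlib

open Cardinal Set

/-- The type of ordinals below `o`, serving as the domain `λ` (for `o = λ.ord`). -/
abbrev Blw (o : Ordinal.{0}) := {α : Ordinal.{0} // α < o}

/-- The space `^λ2` of functions from `λ` to `2` (for `o = λ.ord`). -/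
abbrev CSp (o : Ordinal.{0}) := Blw o → Bool

/-- The cylinder `[ν] = {η ∈ ^λ2 : ν ⊴ η}` determined by `ν : β → 2`, `β < o`. -/
def cylC (o β : Ordinal.{0}) (ν : Blw β → Bool) : Set (CSp o) :=
  {η | ∀ (α : Ordinal.{0}) (hβ : α < β) (ho : α < o), η ⟨α, ho⟩ = ν ⟨α, hβ⟩}

/-- The `<λ`-box topology on `^λ2`: generated by the cylinders `[ν]`, `ν : β → 2`,
`β < o` (its open sets are exactly the unions of such cylinders). -/
def boxC (o : Ordinal.{0}) : TopologicalSpace (CSp o) :=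
  TopologicalSpace.generateFrom
    {S | ∃ β : Ordinal.{0}, β < o ∧ ∃ ν : Blw β → Bool, S = cylC o β ν}

/-- The product `∏_{ζ<λ} θ_ζ` (for `o = λ.ord`), as the set of functions
`η : λ → Ord` with `η ζ < θ ζ` for all `ζ < λ`. -/
def PSp (o : Ordinal.{0}) (θ : Blw o → Cardinal.{0}) : Type 1 :=
  {η : Blw o → Ordinal.{0} // ∀ ζ, η ζ < (θ ζ).ord}

/-- The cylinder `[ν] = {η ∈ ∏_{ζ<λ} θ_ζ : ν ⊴ η}` determined by
`ν : ∏_{ζ<β} θ_ζ`, `β < o`. -/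
def cylP (o : Ordinal.{0}) (θ : Blw o → Cardinal.{0}) (β : Ordinal.{0})
    (ν : Blw β → Ordinal.{0}) : Set (PSp o θ) :=
  {η | ∀ (α : Ordinal.{0}) (hβ : α < β) (ho : α < o), η.1 ⟨α, ho⟩ = ν ⟨α, hβ⟩}

/-- The `<λ`-box topology on `∏_{ζ<λ} θ_ζ`: generated by the cylinders `[ν]`,
`ν ∈ ∏_{ζ<β} θ_ζ`, `β < o` (its open sets are exactly the unions of such
cylinders). -/
def boxP (o : Ordinal.{0}) (θ : Blw o → Cardinal.{0}) : TopologicalSpace (PSp o θ) :=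
  TopologicalSpace.generateFrom
    {S | ∃ β : Ordinal.{0}, β < o ∧ ∃ ν : Blw β → Ordinal.{0},
      (∀ (α : Ordinal.{0}) (hβ : α < β) (ho : α < o), ν ⟨α, hβ⟩ < (θ ⟨α, ho⟩).ord) ∧
      S = cylP o θ β ν}
/-- `blockSum t ε = Σ_{ζ<ε} t ζ` (ordinal sum): `0` at `0`, `blockSum t δ + t δ`
at `δ+1`, and the supremum at limits. -/
noncomputable def blockSum (t : Ordinal.{0} → Ordinal.{0}) (ε : Ordinal.{0}) : Ordinal.{0} :=
  Ordinal.limitRecOn ε 0 (fun δ ih => ih + t δ)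
    (fun δ _ ih => ⨆ β : Set.Iio δ, ih β.1 β.2)

/-- `sFn lam θ ε = s(ε) = Σ_{ζ<ε} θ_ζ` (ordinal sum). -/
noncomputable def sFn (lam : Cardinal.{0}) (θ : Blw lam.ord → Cardinal.{0}) :
    Ordinal.{0} → Ordinal.{0} :=
  blockSum (fun ζ => if h : ζ < lam.ord then (θ ⟨ζ, h⟩).ord else 0)

/-- `F : ^λ2 → ∏_{ε<λ} θ_ε` is the block-coding map: `F(η)(ε) = 0` if
`η(s(ε)+i) = 0` for all `i < θ_ε`, and `F(η)(ε) = 1+i` for the least `i < θ_ε`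
with `η(s(ε)+i) = 1` otherwise. -/
def FSpec (lam : Cardinal.{0}) (θ : Blw lam.ord → Cardinal.{0})
    (F : CSp lam.ord → PSp lam.ord θ) : Prop :=
  ∀ (η : CSp lam.ord) (ε : Blw lam.ord),
    ((∀ i < (θ ε).ord, ∀ h : sFn lam θ ε.1 + i < lam.ord,
        η ⟨sFn lam θ ε.1 + i, h⟩ = false) → (F η).1 ε = 0) ∧
    (∀ i < (θ ε).ord, ∀ h : sFn lam θ ε.1 + i < lam.ord,
        η ⟨sFn lam θ ε.1 + i, h⟩ = true →
        (∀ j < i, ∀ h' : sFn lam θ ε.1 + j < lam.ord,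
          η ⟨sFn lam θ ε.1 + j, h'⟩ = false) →
        (F η).1 ε = 1 + i)

/-!
`F` is continuous: `F η ε` only reads the `ε`-th block `[s ε, s ε + θ_ε)`, and by regularity of
`λ` all blocks below `ε` end before `s ε < λ`. Moreover, for `η ∈ [ν]` with `ν` of length
`β`, the image of `[ν]` contains the cylinder `[F η ↾ β]`: the blocks `ζ < β` lie below `s β`,
so they can be copied from `η`, while the blocks `ζ ≥ β` start at or after `s β ≥ β`, so they
are untouched by `ν` and can be filled to code any prescribed value. A continuous map under
which nonempty open sets have images with nonempty interior pulls nowhere dense sets back to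
nowhere dense sets.
-/

lemma IsNowhereDense.preimage {X Y : Type*} [TopologicalSpace X] [TopologicalSpace Y]
    {f : X → Y} (hf : Continuous f)
    (hV : ∀ V : Set X, IsOpen V → V.Nonempty → (interior (f '' V)).Nonempty)
    {U : Set Y} (hU : IsNowhereDense U) : IsNowhereDense (f ⁻¹' U) := by
  rw [IsNowhereDense, eq_empty_iff_forall_notMem]
  intro x hx
  set V := interior (closure (f ⁻¹' U))
  have hW : ¬ interior (f '' V) ⊆ closure U := fun h => by
    have hempty := interior_maximal h isOpen_interior
    rw [hU, subset_empty_iff] at hempty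
    exact (hV V isOpen_interior ⟨x, hx⟩).ne_empty hempty
  obtain ⟨_, hyW, hyU⟩ := not_subset.mp hW
  obtain ⟨x', hx'V, rfl⟩ := interior_subset hyW
  obtain ⟨z, hzU', hzU⟩ := mem_closure_iff.mp (interior_subset hx'V) _
    (isClosed_closure.isOpen_compl.preimage hf) hyU
  exact hzU' (subset_closure hzU)

section BlockSum

open Ordinal

variable {t : Ordinal.{0} → Ordinal.{0}}

lemma blockSum_zero : blockSum t 0 = 0 :=
  limitRecOn_zero _ _ _

lemma blockSum_add_one (δ : Ordinal.{0}) : blockSum t (δ + 1) = blockSum t δ + t δ := by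
  rw [blockSum, limitRecOn_add_one]; rfl

lemma blockSum_limit {δ : Ordinal.{0}} (h : Order.IsSuccLimit δ) :
    blockSum t δ = ⨆ β : Iio δ, blockSum t β.1 :=
  limitRecOn_limit _ _ _ _ h

lemma blockSum_mono : Monotone (blockSum t) := by
  intro ζ ε hζε
  induction ε using limitRecOn generalizing ζ with
  | zero => rw [nonpos_iff_eq_zero.mp hζε]
  | add_one δ ih =>
    rcases hζε.eq_or_lt with rfl | hζδ
    · rfl
    · rw [blockSum_add_one]
      exact (ih (Order.lt_add_one_iff.mp hζδ)).trans le_self_add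
  | limit δ hδ _ =>
    rcases hζε.eq_or_lt with rfl | hζδ
    · rfl
    · rw [blockSum_limit hδ]
      exact Ordinal.le_iSup (fun β : Iio δ => blockSum t β.1) ⟨ζ, hζδ⟩

lemma blockSum_add_lt {ζ ε i : Ordinal.{0}} (hζε : ζ < ε) (hi : i < t ζ) :
    blockSum t ζ + i < blockSum t ε :=
  calc blockSum t ζ + i < blockSum t ζ + t ζ := add_lt_add_right hi _
    _ = blockSum t (ζ + 1) := (blockSum_add_one ζ).symm
    _ ≤ blockSum t ε := blockSum_mono (Order.add_one_le_of_lt hζε)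

lemma blockSum_add_injective {ζ ζ' i i' : Ordinal.{0}} (hi : i < t ζ) (hi' : i' < t ζ')
    (h : blockSum t ζ + i = blockSum t ζ' + i') : ζ = ζ' ∧ i = i' := by
  rcases lt_trichotomy ζ ζ' with hζ | rfl | hζ
  · exact absurd h ((blockSum_add_lt hζ hi).trans_le le_self_add).ne
  · exact ⟨rfl, (add_right_inj _).mp h⟩
  · exact absurd h ((blockSum_add_lt hζ hi').trans_le le_self_add).ne'

lemma le_blockSum {ε : Ordinal.{0}} (ht : ∀ ζ < ε, 1 ≤ t ζ) : ε ≤ blockSum t ε := by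
  induction ε using limitRecOn with
  | zero => exact zero_le
  | add_one δ ih =>
    rw [blockSum_add_one]
    exact add_le_add (ih fun ζ hζ => ht ζ (hζ.trans (lt_add_one δ))) (ht δ (lt_add_one δ))
  | limit δ hδ ih =>
    refine le_of_forall_lt fun γ hγ => ?_
    have hγδ : γ + 1 < δ := by rw [← Order.succ_eq_add_one]; exact hδ.succ_lt hγ
    calc γ < γ + 1 := lt_add_one γ
      _ ≤ blockSum t (γ + 1) := ih _ hγδ fun ζ hζ => ht ζ (hζ.trans hγδ)
      _ ≤ blockSum t δ := blockSum_mono hγδ.le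

lemma blockSum_lt_ord {κ : Cardinal.{0}} (hκ : κ.IsRegular) (ht : ∀ ζ < κ.ord, t ζ < κ.ord)
    {ε : Ordinal.{0}} (hε : ε < κ.ord) : blockSum t ε < κ.ord := by
  induction ε using limitRecOn with
  | zero => rwa [blockSum_zero]
  | add_one δ ih =>
    have hδ := (lt_add_one δ).trans hε
    rw [blockSum_add_one]
    exact isPrincipal_add_ord hκ.aleph0_le (ih hδ) (ht δ hδ)
  | limit δ hδ ih =>
    rw [blockSum_limit hδ]
    refine lift_iSup_lt_of_lt_cof ?_ fun β => ih β.1 β.2 (β.2.trans hε)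
    rwa [Cardinal.mk_Iio_ordinal, ← lift_cof, hκ.cof_ord, Cardinal.lift_id'.{0, 1},
      Cardinal.lift_lt, ← Cardinal.lt_ord]

end BlockSum

lemma isOpen_cylC {o β : Ordinal.{0}} (hβ : β < o) (ν : Blw β → Bool) :
    @IsOpen _ (boxC o) (cylC o β ν) :=
  TopologicalSpace.isOpen_generateFrom_of_mem ⟨β, hβ, ν, rfl⟩

lemma isOpen_cylP {o β : Ordinal.{0}} {θ : Blw o → Cardinal.{0}} (hβ : β < o)
    {ν : Blw β → Ordinal.{0}}
    (hν : ∀ (α : Ordinal.{0}) (hβ : α < β) (ho : α < o), ν ⟨α, hβ⟩ < (θ ⟨α, ho⟩).ord) :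
    @IsOpen _ (boxP o θ) (cylP o θ β ν) :=
  TopologicalSpace.isOpen_generateFrom_of_mem ⟨β, hβ, ν, hν, rfl⟩

section BlockCoding

variable {lam : Cardinal.{0}} {θ : Blw lam.ord → Cardinal.{0}}

open Ordinal

lemma sFn_mono : Monotone (sFn lam θ) :=
  blockSum_mono

lemma sFn_add_lt_sFn {ζ : Blw lam.ord} {ε i : Ordinal.{0}} (hζε : ζ.1 < ε) (hi : i < (θ ζ).ord) :
    sFn lam θ ζ.1 + i < sFn lam θ ε :=
  blockSum_add_lt hζε (by rwa [dif_pos ζ.2])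

lemma sFn_add_injective {ζ ζ' : Blw lam.ord} {i i' : Ordinal.{0}} (hi : i < (θ ζ).ord)
    (hi' : i' < (θ ζ').ord) (h : sFn lam θ ζ.1 + i = sFn lam θ ζ'.1 + i') : ζ = ζ' ∧ i = i' := by
  obtain ⟨hζ, hi⟩ := blockSum_add_injective (by rwa [dif_pos ζ.2]) (by rwa [dif_pos ζ'.2]) h
  exact ⟨Subtype.ext hζ, hi⟩

lemma le_sFn (hθ : ∀ ζ, θ ζ ≠ 0) {ε : Ordinal.{0}} (hε : ε < lam.ord) : ε ≤ sFn lam θ ε :=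
  le_blockSum fun ζ hζ => by
    rw [dif_pos (hζ.trans hε), Order.one_le_iff_ne_zero, ne_eq, Cardinal.ord_eq_zero]
    exact hθ _

lemma sFn_lt_ord (hreg : lam.IsRegular) (hθ : ∀ ζ, θ ζ < lam) {ε : Ordinal.{0}}
    (hε : ε < lam.ord) : sFn lam θ ε < lam.ord :=
  blockSum_lt_ord hreg (fun ζ hζ => by rw [dif_pos hζ]; exact ord_lt_ord.mpr (hθ _)) hε

lemma sFn_add_lt_ord (hreg : lam.IsRegular) (hθ : ∀ ζ, θ ζ < lam) (ζ : Blw lam.ord)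
    {i : Ordinal.{0}} (hi : i < (θ ζ).ord) : sFn lam θ ζ.1 + i < lam.ord :=
  isPrincipal_add_ord hreg.aleph0_le (sFn_lt_ord hreg hθ ζ.2) (hi.trans (ord_lt_ord.mpr (hθ ζ)))

namespace FSpec

variable {F : CSp lam.ord → PSp lam.ord θ}

lemma apply_eq_of_eqOn_block (hF : FSpec lam θ F) {η η' : CSp lam.ord} {ζ : Blw lam.ord}
    (h : ∀ i < (θ ζ).ord, ∀ hi : sFn lam θ ζ.1 + i < lam.ord,
      η ⟨sFn lam θ ζ.1 + i, hi⟩ = η' ⟨sFn lam θ ζ.1 + i, hi⟩) :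
    (F η).1 ζ = (F η').1 ζ := by
  by_cases hzero : ∀ i < (θ ζ).ord, ∀ hi : sFn lam θ ζ.1 + i < lam.ord,
      η ⟨sFn lam θ ζ.1 + i, hi⟩ = false
  · rw [(hF η ζ).1 hzero, (hF η' ζ).1 fun i hi hpos => h i hi hpos ▸ hzero i hi hpos]
  push Not at hzero
  simp only [ne_eq, Bool.not_eq_false] at hzero
  obtain ⟨m, ⟨hmθ, hm, hmtrue⟩, hmin⟩ := wellFounded_lt.has_min
    {i | i < (θ ζ).ord ∧ ∃ hi : sFn lam θ ζ.1 + i < lam.ord, η ⟨sFn lam θ ζ.1 + i, hi⟩ = true}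
    hzero
  have hleast : ∀ j < m, ∀ hj : sFn lam θ ζ.1 + j < lam.ord,
      η ⟨sFn lam θ ζ.1 + j, hj⟩ = false :=
    fun j hjm hj => Bool.not_eq_true _ ▸ fun htrue => hmin j ⟨hjm.trans hmθ, hj, htrue⟩ hjm
  rw [(hF η ζ).2 m hmθ hm hmtrue hleast, (hF η' ζ).2 m hmθ hm (h m hmθ hm ▸ hmtrue)
    fun j hjm hj => h j (hjm.trans hmθ) hj ▸ hleast j hjm hj]

lemma apply_eq_of_block_eq_decide (hF : FSpec lam θ F) (hreg : lam.IsRegular)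
    (hθ : ∀ ζ, θ ζ < lam) {η : CSp lam.ord} {ζ : Blw lam.ord} {v : Ordinal.{0}}
    (hv : v < (θ ζ).ord)
    (h : ∀ i < (θ ζ).ord, ∀ hi : sFn lam θ ζ.1 + i < lam.ord,
      η ⟨sFn lam θ ζ.1 + i, hi⟩ = decide (v = 1 + i)) :
    (F η).1 ζ = v := by
  rcases eq_or_ne v 0 with rfl | hv0
  · refine (hF η ζ).1 fun i hi hpos => ?_
    rw [h i hi hpos, decide_eq_false_iff_not]
    exact (zero_lt_one.trans_le le_self_add).ne
  obtain ⟨i, rfl⟩ := exists_add_of_le (Order.one_le_iff_ne_zero.mpr hv0)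
  have hi : i < (θ ζ).ord := le_add_self.trans_lt hv
  refine (hF η ζ).2 i hi (sFn_add_lt_ord hreg hθ ζ hi) (by simp [h i hi]) fun j hji hj => ?_
  simp [h j (hji.trans hi), hji.ne']

open scoped Classical in
noncomputable def blockEncode (η : CSp lam.ord) (β : Ordinal.{0}) (y : PSp lam.ord θ) :
    CSp lam.ord :=
  fun a => if a.1 < sFn lam θ β then η a
    else decide (∃ ζ i, a.1 = sFn lam θ ζ.1 + i ∧ y.1 ζ = 1 + i)

lemma continuous (hF : FSpec lam θ F) (hreg : lam.IsRegular) (hθ : ∀ ζ, θ ζ < lam) :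
    @Continuous _ _ (boxC lam.ord) (boxP lam.ord θ) F := by
  let _ := boxC lam.ord
  refine continuous_generateFrom_iff.mpr ?_
  rintro _ ⟨β, hβ, ρ, -, rfl⟩
  have hs := sFn_lt_ord hreg hθ hβ
  refine isOpen_iff_forall_mem_open.mpr fun η hη =>
    ⟨cylC lam.ord (sFn lam θ β) fun a => η ⟨a.1, a.2.trans hs⟩, fun η' hη' α hαβ hα => ?_,
      isOpen_cylC hs _, fun _ _ _ => rfl⟩
  rw [← hη α hαβ hα]
  exact hF.apply_eq_of_eqOn_block fun i hi hpos => hη' _ (sFn_add_lt_sFn hαβ hi) hpos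

lemma cylP_subset_image_cylC (hF : FSpec lam θ F) (hreg : lam.IsRegular)
    (hθ0 : ∀ ζ, θ ζ ≠ 0) (hθ : ∀ ζ, θ ζ < lam) {β : Ordinal.{0}} (hβ : β < lam.ord)
    {ν : Blw β → Bool} {η : CSp lam.ord} (hη : η ∈ cylC lam.ord β ν) :
    cylP lam.ord θ β (fun ζ => (F η).1 ⟨ζ.1, ζ.2.trans hβ⟩) ⊆ F '' cylC lam.ord β ν := by
  intro y hy
  refine ⟨blockEncode η β y, fun α hαβ hα => ?_, Subtype.ext <| funext fun ζ => ?_⟩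
  · rw [blockEncode, if_pos (hαβ.trans_le (le_sFn hθ0 hβ))]
    exact hη α hαβ hα
  rcases lt_or_ge ζ.1 β with hζβ | hβζ
  · rw [hy ζ.1 hζβ ζ.2]
    refine hF.apply_eq_of_eqOn_block fun i hi hpos => ?_
    rw [blockEncode, if_pos (sFn_add_lt_sFn hζβ hi)]
  refine hF.apply_eq_of_block_eq_decide hreg hθ (y.2 ζ) fun i hi hpos => ?_
  rw [blockEncode, if_neg (not_lt.mpr ((sFn_mono hβζ).trans le_self_add)), decide_eq_decide]
  refine ⟨fun ⟨ζ', i', he, hy'⟩ => ?_, fun h => ⟨ζ, i, rfl, h⟩⟩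
  obtain ⟨rfl, rfl⟩ := sFn_add_injective hi (le_add_self.trans_lt (hy' ▸ y.2 ζ')) he
  exact hy'

end FSpec

end BlockCoding

lemma isTopologicalBasis_cylC {o : Ordinal.{0}} (ho : 0 < o) :
    @TopologicalSpace.IsTopologicalBasis (CSp o) (boxC o)
      {S | ∃ β : Ordinal.{0}, β < o ∧ ∃ ν : Blw β → Bool, S = cylC o β ν} := by
  let _ := boxC o
  refine ⟨?_, ?_, rfl⟩
  · rintro _ ⟨β₁, hβ₁, ν₁, rfl⟩ _ ⟨β₂, hβ₂, ν₂, rfl⟩ x ⟨hx₁, hx₂⟩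
    have hβ : max β₁ β₂ < o := max_lt hβ₁ hβ₂
    refine ⟨cylC o (max β₁ β₂) fun α => x ⟨α.1, α.2.trans hβ⟩, ⟨_, hβ, _, rfl⟩,
      fun _ _ _ => rfl, fun η hη => ⟨fun α hα hαo => ?_, fun α hα hαo => ?_⟩⟩
    · rw [hη α (hα.trans_le (le_max_left _ _)) hαo]
      exact hx₁ α hα hαo
    · rw [hη α (hα.trans_le (le_max_right _ _)) hαo]
      exact hx₂ α hα hαo
  · refine sUnion_eq_univ_iff.mpr fun x => ⟨cylC o 0 fun α => (not_lt_zero α.2).elim,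
      ⟨0, ho, _, rfl⟩, fun _ hα => (not_lt_zero hα).elim⟩

theorem blockCoding_preimage_nowhereDense_general (lam : Cardinal.{0}) (hreg : lam.IsRegular)
    (θ : Blw lam.ord → Cardinal.{0})
    (hθ : ∀ ζ, ℵ₀ ≤ θ ζ ∧ θ ζ < lam)
    (F : CSp lam.ord → PSp lam.ord θ) (hF : FSpec lam θ F)
    (U : Set (PSp lam.ord θ)) (hU : @IsNowhereDense _ (boxP lam.ord θ) U) :
    @IsNowhereDense _ (boxC lam.ord) (F ⁻¹' U) := by
  let _ := boxC lam.ord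
  let _ := boxP lam.ord θ
  have hθ0 : ∀ ζ, θ ζ ≠ 0 := fun ζ => (aleph0_pos.trans_le (hθ ζ).1).ne'
  have hθlam : ∀ ζ, θ ζ < lam := fun ζ => (hθ ζ).2
  refine IsNowhereDense.preimage (hF.continuous hreg hθlam) (fun V hV ⟨η, hηV⟩ => ?_) hU
  obtain ⟨_, ⟨β, hβ, ν, rfl⟩, hην, hνV⟩ :=
    (isTopologicalBasis_cylC (ord_pos.mpr hreg.pos)).exists_subset_of_mem_open hηV hV
  have hsub := hF.cylP_subset_image_cylC hreg hθ0 hθlam hβ hην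
  refine ⟨F η, interior_maximal (hsub.trans (image_mono hνV)) ?_ fun _ _ _ => rfl⟩
  exact isOpen_cylP hβ fun _ _ _ => (F η).2 _

/-- for `λ` regular uncountable, `⟨θ_ε : ε < λ⟩` infinite cardinals
below `λ`, and `F` the block-coding map, the preimage under `F` of any nowhere
dense subset of `∏_{ε<λ} θ_ε` is nowhere dense in `^λ2` (`<λ`-box topologies). -/
theorem blockCoding_preimage_nowhereDense (lam : Cardinal.{0}) (hreg : lam.IsRegular)
    (hunc : ℵ₀ < lam) (θ : Blw lam.ord → Cardinal.{0})
    (hθ : ∀ ζ, ℵ₀ ≤ θ ζ ∧ θ ζ < lam)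
    (F : CSp lam.ord → PSp lam.ord θ) (hF : FSpec lam θ F)
    (U : Set (PSp lam.ord θ)) (hU : @IsNowhereDense _ (boxP lam.ord θ) U) :
    @IsNowhereDense _ (boxC lam.ord) (F ⁻¹' U) :=
  blockCoding_preimage_nowhereDense_general lam hreg θ hθ F hF U hU
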